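/- Define α(t) = (π + θ(t))/(2L(t)) where θ(t) = arccos(2t³(3-t²)/(1+t²)²) and L(t) = (1/2)·arcosh((1+8t²+21t⁴-2t⁶)/(2t²(1+t²)²)). Then α(1/2) > α(1). -/
import Mathlib

noncomputable def arcosh (x : ℝ) : ℝ := Real.log (x + Real.sqrt (x^2 - 1))

noncomputable def θ (t : ℝ) : ℝ := Real.arccos (2*t^3*(3 - t^2) / (1+t^2)^2)

noncomputable def L (t : ℝ) : ℝ :=
  (1/2) * arcosh ((1 + 8*t^2 + 21*t^4 - 2*t^6) / (2*t^2*(1+t^2)^2))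

noncomputable def α (t : ℝ) : ℝ := (Real.pi + θ t) / (2 * L t)

set_option maxHeartbeats 1000000 in
theorem stmt_11 : α (1/2) > α 1 := by
  have h1 : α 1 = Real.pi / Real.log (7/2 + Real.sqrt (45/4)) := by
    unfold α θ L arcosh
    norm_num [Real.arccos_one]
    ring
  have h2 : α (1/2) = (Real.pi + Real.arccos (11/25)) /
      Real.log (137/25 + Real.sqrt (18144/625)) := by
    unfold α θ L arcosh
    norm_num
    ring
  -- sqrt bounds
  have hsA : (33541:ℝ)/10000 < Real.sqrt (45/4) := by
    rw [show (45:ℝ)/4 = (45/4 : ℝ) from rfl]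
    rw [Real.lt_sqrt (by norm_num)]
    norm_num
  have hsB : Real.sqrt (18144/625) < (53881:ℝ)/10000 := by
    rw [Real.sqrt_lt' (by norm_num)]
    norm_num
  set A : ℝ := 7/2 + Real.sqrt (45/4) with hAdef
  clear_value A
  set B : ℝ := 137/25 + Real.sqrt (18144/625) with hBdef
  clear_value B
  have hA : A > 68541/10000 := by rw [hAdef]; linarith
  have hB : B < 108681/10000 := by rw [hBdef]; linarith
  have hBl : B > 137/25 := by
    rw [hBdef]; nlinarith [Real.sqrt_nonneg ((18144:ℝ)/625), Real.sq_sqrt (by norm_num : (0:ℝ) ≤ 18144/625)]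
  have e1u : Real.exp 1 < 2.7182818286 := Real.exp_one_lt_d9
  have e1l : 2.7182818283 < Real.exp 1 := Real.exp_one_gt_d9
  have e1pos : (0:ℝ) < Real.exp 1 := Real.exp_pos 1
  -- exp 2 bounds
  have he2 : Real.exp 2 = Real.exp 1 * Real.exp 1 := by
    rw [← Real.exp_add]; norm_num
  have he2u : Real.exp 2 < 7.3890561 := by rw [he2]; nlinarith
  have he2l : Real.exp 2 > 7.38905609 := by rw [he2]; nlinarith
  -- log A > 48/25
  have hlogA : Real.log A > 48/25 := by
    rw [gt_iff_lt, Real.lt_log_iff_exp_lt (by linarith)]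
    have h : Real.exp (48/25) * Real.exp (2/25) = Real.exp 2 := by
      rw [← Real.exp_add]; norm_num
    have h2 : (27:ℝ)/25 ≤ Real.exp (2/25) := by
      have := Real.add_one_le_exp ((2:ℝ)/25); linarith
    have h3 : (0:ℝ) < Real.exp (48/25) := Real.exp_pos _
    nlinarith
  -- log B < 61/25
  have hlogB : Real.log B < 61/25 := by
    have hBpos : (0:ℝ) < B := by linarith
    rw [Real.log_lt_iff_lt_exp hBpos]
    have h : Real.exp (61/25) = Real.exp 2 * Real.exp (11/25) := by
      rw [← Real.exp_add]; norm_num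
    have h4 : Real.exp (11/25) = Real.exp (11/100) ^ 4 := by
      rw [← Real.exp_nat_mul]; norm_num
    have h5 : (111:ℝ)/100 ≤ Real.exp (11/100) := by
      have := Real.add_one_le_exp ((11:ℝ)/100); linarith
    have h6 : Real.exp (11/25) ≥ (111/100:ℝ)^4 := by
      rw [h4]
      have : (0:ℝ) ≤ 111/100 := by norm_num
      exact pow_le_pow_left₀ this h5 4
    nlinarith
  -- arccos bound
  have hcos : Real.cos (9/10) > 11/25 := by
    have hb := Real.cos_bound (x := 9/10) (by rw [abs_of_nonneg]; norm_num; norm_num)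
    rw [abs_of_nonneg (by norm_num : (0:ℝ) ≤ 9/10)] at hb
    have := abs_sub_le_iff.1 hb
    norm_num at this ⊢
    linarith [this.2]
  have harccos : Real.arccos (11/25) > 9/10 := by
    by_contra h
    push_neg at h
    have h0 : 0 ≤ Real.arccos (11/25) := Real.arccos_nonneg _
    have h9 : (9:ℝ)/10 ≤ Real.pi := by linarith [Real.pi_gt_d6]
    have := Real.cos_le_cos_of_nonneg_of_le_pi h0 h9 h
    rw [Real.cos_arccos (by norm_num) (by norm_num)] at this
    linarith
  -- pi bounds
  have hpiu : Real.pi < 3.141593 := Real.pi_lt_d6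
  have hpil : Real.pi > 3.141592 := Real.pi_gt_d6
  -- final
  rw [h1, h2]
  have hlApos : 0 < Real.log A := by linarith
  have hlBpos : 0 < Real.log B := Real.log_pos (by linarith)
  rw [gt_iff_lt, div_lt_div_iff₀ hlApos hlBpos]
  nlinarith [mul_lt_mul_of_pos_left hlogB (by linarith : (0:ℝ) < Real.pi),
    mul_lt_mul_of_pos_right harccos hlApos]
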